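/- Let (Z, Σ) be a measurable space, let D_1, …, D_N be probability measures on Z, let H be a nonempty finite set of hypotheses, let M > 0, and let ℓ : H × Z → [0, M] be a function measurable in its second argument. For each i ∈ {1, …, N}, let Z_{i,1}, …, Z_{i,n_i} be independent random samples with Z_{i,j} distributed according to D_i, all samples across clients being mutually independent. Let υ_1, …, υ_N be nonnegative weights and let p, q ∈ (1, ∞) satisfy 1/p + 1/q = 1 (in the paper, q = rβ). Define, for h ∈ H: the true weighted risk L_υ(h) = Σ_{i=1}^N υ_i · ∫ ℓ(h, z) dD_i(z); the empirical weighted risk L̂_υ(h) = Σ_{i=1}^N (υ_i / n_i) · Σ_{j=1}^{n_i} ℓ(h, Z_{i,j}); and the rescaled empirical risk L̃_q(h) = ( Σ_{i=1}^N [ (1/n_i) Σ_{j=1}^{n_i} ℓ(h, Z_{i,j}) ]^q )^{1/q}. Then for any δ ∈ (0, 1), with probability at least 1 − δ over the draw of all samples, for every h ∈ H: L_υ(h) ≤ ‖υ‖_p · L̃_q(h) + E[ max_{h' ∈ H} ( L_υ(h') − L̂_υ(h') ) ] + M · sqrt( ( Σ_{i=1}^N υ_i² / (2 n_i) ) ·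 log(1/δ) ), where ‖υ‖_p = ( Σ_{i=1}^N υ_i^p )^{1/p} and the expectation E is taken over an independent draw of all samples. -/

import Mathlib

/-!
McDiarmid's inequality, proved by peeling off one coordinate at a time: with the remaining
coordinates fixed, the first one moves `f` within an interval of length `c 0`, so Hoeffding's
lemma makes the conditional increment sub-Gaussian with parameter `(c 0 / 2) ^ 2`, and these
parameters add up along the martingale decomposition of `f - 𝔼 f`.

Changing the single sample `Z_{i,j}` changes every `L̂_υ(h)`, hence `max_h (L_υ(h) - L̂_υ(h))`, by
at most `υ_i M / n_i`, so by McDiarmid this maximum stays below its mean plus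
`M √(Σ_i υ_i² / (2 n_i) · log (1/δ))` with probability at least `1 - δ`. Hölder's inequality
bounds `L̂_υ(h) = Σ_i υ_i F_i` by `‖υ‖_p · L̃_q(h)`.
-/

open MeasureTheory ProbabilityTheory Real Finset
open scoped NNReal ENNReal

def HasBoundedDifferences {ι : Type*} {Ω : ι → Type*} (f : (∀ i, Ω i) → ℝ) (c : ι → ℝ≥0) :
    Prop :=
  ∀ i x y, (∀ j, j ≠ i → x j = y j) → f x - f y ≤ c i

namespace HasBoundedDifferences

variable {ι : Type*} {Ω : ι → Type*} {f : (∀ i, Ω i) → ℝ} {c : ι → ℝ≥0}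

lemma sub_le_sum [Fintype ι] (hf : HasBoundedDifferences f c) (x y : ∀ i, Ω i) :
    f x - f y ≤ ∑ i, (c i : ℝ) := by
  classical
  suffices ∀ s : Finset ι, f (s.piecewise x y) - f y ≤ ∑ i ∈ s, (c i : ℝ) by
    simpa using this univ
  intro s
  induction s using Finset.induction_on with
  | empty => simp
  | insert i s hi ih =>
    have hstep : f ((insert i s).piecewise x y) - f (s.piecewise x y) ≤ c i :=
      hf i _ _ fun j hj => by simp [Finset.piecewise, hj]
    rw [sum_insert hi]
    linarith

lemma mem_Icc [Fintype ι] (hf : HasBoundedDifferences f c) (x₀ x : ∀ i, Ω i) :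
    f x ∈ Set.Icc (f x₀ - ∑ i, (c i : ℝ)) (f x₀ + ∑ i, (c i : ℝ)) :=
  ⟨by linarith [hf.sub_le_sum x₀ x], by linarith [hf.sub_le_sum x x₀]⟩

lemma const_sub (hf : HasBoundedDifferences f c) (a : ℝ) :
    HasBoundedDifferences (fun x => a - f x) c := fun i x y hxy => by
  linarith [hf i y x fun j hj => (hxy j hj).symm]

lemma finset_sup' {H : Type*} {s : Finset H} (hs : s.Nonempty) {f : H → (∀ i, Ω i) → ℝ}
    (hf : ∀ h ∈ s, HasBoundedDifferences (f h) c) :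
    HasBoundedDifferences (fun x => s.sup' hs fun h => f h x) c := fun i x y hxy => by
  rw [sub_le_iff_le_add]
  refine sup'_le hs _ fun h hh => ?_
  linarith [hf h hh i x y hxy, le_sup' (fun h => f h y) hh]

lemma comp_insertNth {m : ℕ} {Ω : Fin (m + 1) → Type*} {f : (∀ i, Ω i) → ℝ}
    {c : Fin (m + 1) → ℝ≥0} (hf : HasBoundedDifferences f c) (i : Fin (m + 1)) (x : Ω i) :
    HasBoundedDifferences (fun t => f (i.insertNth x t)) fun j => c (i.succAbove j) :=
  fun k t t' htt' => hf _ _ _ fun j hj => by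
    induction j using Fin.succAboveCases i with
    | x => simp
    | p j => simp [htt' j fun h => hj (congrArg _ h)]

lemma insertNth_sub_insertNth_le {m : ℕ} {Ω : Fin (m + 1) → Type*} {f : (∀ i, Ω i) → ℝ}
    {c : Fin (m + 1) → ℝ≥0} (hf : HasBoundedDifferences f c) (i : Fin (m + 1)) (x x' : Ω i)
    (t : ∀ j, Ω (i.succAbove j)) : f (i.insertNth x t) - f (i.insertNth x' t) ≤ c i :=
  hf i _ _ fun j hj => by
    obtain ⟨k, rfl⟩ := Fin.exists_succAbove_eq hj
    simp

lemma integral_of_forall {α : Type*} [MeasurableSpace α] {μ : Measure α}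
    [IsProbabilityMeasure μ] {F : α → (∀ i, Ω i) → ℝ} (hF : ∀ x, HasBoundedDifferences (F x) c)
    (hint : ∀ t, Integrable (fun x => F x t) μ) :
    HasBoundedDifferences (fun t => ∫ x, F x t ∂μ) c := fun i t t' htt' => by
  rw [← integral_sub (hint t) (hint t')]
  simpa using integral_mono ((hint t).sub (hint t')) (integrable_const (c i : ℝ))
    fun x => hF x i t t' htt'

end HasBoundedDifferences

lemma hasBoundedDifferences_sum_apply {ι : Type*} [Fintype ι] {Ω : ι → Type*}
    {φ : ∀ i, Ω i → ℝ} {c : ι → ℝ≥0} (hφ : ∀ i a b, φ i a - φ i b ≤ c i) :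
    HasBoundedDifferences (fun x => ∑ i, φ i (x i)) c := fun i x y hxy => by
  rw [← sum_sub_distrib, sum_eq_single i (fun j _ hj => by rw [hxy j hj, sub_self]) (by simp)]
  exact hφ i _ _

lemma exists_mem_Icc_of_sub_le {α : Type*} [Nonempty α] {X : α → ℝ} {c : ℝ}
    (h : ∀ x y, X x - X y ≤ c) : ∃ a, ∀ x, X x ∈ Set.Icc a (a + c) := by
  obtain ⟨x₀⟩ := ‹Nonempty α›
  have hbdd : BddBelow (Set.range X) := ⟨X x₀ - c, by rintro _ ⟨y, rfl⟩; linarith [h x₀ y]⟩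
  refine ⟨⨅ y, X y, fun x => ⟨ciInf_le hbdd x, ?_⟩⟩
  have : X x - c ≤ ⨅ y, X y := le_ciInf fun y => by linarith [h x y]
  linarith

namespace ProbabilityTheory

variable {α β : Type*} [MeasurableSpace α] [MeasurableSpace β] {μ : Measure α} {ν : Measure β}

lemma hasSubgaussianMGF_sub_integral_of_sub_le [IsProbabilityMeasure μ] {X : α → ℝ}
    (hX : AEMeasurable X μ) {c : ℝ≥0} (h : ∀ x y, X x - X y ≤ c) :
    HasSubgaussianMGF (fun x => X x - ∫ y, X y ∂μ) ((c / 2) ^ 2) μ := by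
  have := nonempty_of_isProbabilityMeasure μ
  obtain ⟨a, ha⟩ := exists_mem_Icc_of_sub_le h
  simpa using hasSubgaussianMGF_of_mem_Icc hX (ae_of_all μ ha)

lemma HasSubgaussianMGF.sub_integral_of_measurePreserving {f : α → ℝ} {c : ℝ≥0} {e : α ≃ᵐ β}
    (h : HasSubgaussianMGF (fun y => f (e.symm y) - ∫ y', f (e.symm y') ∂ν) c ν)
    (he : MeasurePreserving e μ ν) :
    HasSubgaussianMGF (fun x => f x - ∫ x', f x' ∂μ) c μ := by
  rw [← he.integral_comp', ← he.map_eq] at h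
  simpa [Function.comp_def] using h.of_map e.measurable.aemeasurable

lemma HasSubgaussianMGF.prod_sub_integral [IsProbabilityMeasure μ] [IsProbabilityMeasure ν]
    {F : α × β → ℝ} (hF : Measurable F) {a b : ℝ} (hFab : ∀ p, F p ∈ Set.Icc a b)
    {c₁ c₂ : ℝ≥0} (h₁ : ∀ y, HasSubgaussianMGF (fun x => F (x, y) - ∫ x', F (x', y) ∂μ) c₁ μ)
    (h₂ : HasSubgaussianMGF (fun y => ∫ x, F (x, y) ∂μ - ∫ p, F p ∂μ.prod ν) c₂ ν) :
    HasSubgaussianMGF (fun p => F p - ∫ p', F p' ∂μ.prod ν) (c₁ + c₂) (μ.prod ν) := by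
  set I := ∫ p, F p ∂μ.prod ν
  set G := fun y => ∫ x, F (x, y) ∂μ
  have hint (t : ℝ) : Integrable (fun p => exp (t * (F p - I))) (μ.prod ν) :=
    integrable_exp_mul_of_mem_Icc (hF.sub_const I).aemeasurable
      (ae_of_all _ fun p => ⟨sub_le_sub_right (hFab p).1 I, sub_le_sub_right (hFab p).2 I⟩)
  refine ⟨hint, fun t => ?_⟩
  have hsplit (y : β) : ∫ x, exp (t * (F (x, y) - I)) ∂μ
      = exp (t * (G y - I)) * mgf (fun x => F (x, y) - G y) μ t := by
    rw [mgf, ← integral_const_mul]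
    congr with x
    rw [← exp_add]
    ring_nf
  calc mgf (fun p => F p - I) (μ.prod ν) t
      = ∫ y, ∫ x, exp (t * (F (x, y) - I)) ∂μ ∂ν := integral_prod_symm _ (hint t)
    _ ≤ ∫ y, exp (t * (G y - I)) * exp (c₁ * t ^ 2 / 2) ∂ν := by
        refine integral_mono_of_nonneg
          (ae_of_all _ fun y => integral_nonneg fun x => (exp_pos _).le)
          ((h₂.integrable_exp_mul t).mul_const _) (ae_of_all _ fun y => ?_)
        dsimp only
        rw [hsplit]
        gcongr
        exact (h₁ y).mgf_le t
    _ = mgf (fun y => G y - I) ν t * exp (c₁ * t ^ 2 / 2) := integral_mul_const _ _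
    _ ≤ exp (c₂ * t ^ 2 / 2) * exp (c₁ * t ^ 2 / 2) := by
        gcongr
        exact h₂.mgf_le t
    _ = exp (↑(c₁ + c₂) * t ^ 2 / 2) := by
        rw [← exp_add]
        push_cast
        ring_nf

lemma HasSubgaussianMGF.ofReal_one_sub_le_measure_le [IsProbabilityMeasure μ] {X : α → ℝ}
    {c : ℝ≥0} (h : HasSubgaussianMGF X c μ) {δ : ℝ} (hδ₀ : 0 < δ) (hδ₁ : δ ≤ 1) :
    ENNReal.ofReal (1 - δ) ≤ μ {x | X x ≤ √(2 * c * log (1 / δ))} := by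
  set s := {x | X x ≤ √(2 * c * log (1 / δ))}
  have hlog : 0 ≤ log (1 / δ) := log_nonneg (by rw [le_div_iff₀ hδ₀]; linarith)
  have hcompl : μ sᶜ ≤ ENNReal.ofReal δ := by
    simp only [s, Set.compl_ofPred, not_le]
    rcases eq_or_ne c 0 with rfl | hc
    · have hnull : μ {x | X x ≠ 0} = 0 := ae_iff.1 h.ae_eq_zero_of_hasSubgaussianMGF_zero
      simp only [NNReal.coe_zero, mul_zero, zero_mul, sqrt_zero]
      exact (measure_mono_null (fun x (hx : 0 < X x) => hx.ne') hnull).trans_le bot_le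
    have hc' : (0 : ℝ) < c := by positivity
    calc μ {x | √(2 * c * log (1 / δ)) < X x} ≤ μ {x | √(2 * c * log (1 / δ)) ≤ X x} :=
          measure_mono fun x (hx : _ < X x) => hx.le
      _ = ENNReal.ofReal (μ.real {x | √(2 * c * log (1 / δ)) ≤ X x}) := (ofReal_measureReal).symm
      _ ≤ ENNReal.ofReal (exp (-√(2 * c * log (1 / δ)) ^ 2 / (2 * c))) :=
          ENNReal.ofReal_le_ofReal (h.measure_ge_le (sqrt_nonneg _))
      _ = ENNReal.ofReal δ := by
          rw [sq_sqrt (by positivity), one_div, log_inv]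
          field_simp
          rw [exp_log hδ₀]
  rw [ENNReal.ofReal_sub _ hδ₀.le, ENNReal.ofReal_one, tsub_le_iff_right]
  calc (1 : ℝ≥0∞) = μ (s ∪ sᶜ) := by rw [Set.union_compl_self, measure_univ]
    _ ≤ μ s + μ sᶜ := measure_union_le _ _
    _ ≤ μ s + ENNReal.ofReal δ := by gcongr

end ProbabilityTheory

namespace HasBoundedDifferences

theorem hasSubgaussianMGF_sub_integral_pi_fin {m : ℕ} {Ω : Fin m → Type*}
    [∀ i, MeasurableSpace (Ω i)] {f : (∀ i, Ω i) → ℝ} {c : Fin m → ℝ≥0}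
    (hc : HasBoundedDifferences f c) (μ : ∀ i, Measure (Ω i)) [∀ i, IsProbabilityMeasure (μ i)]
    (hf : Measurable f) :
    HasSubgaussianMGF (fun x => f x - ∫ y, f y ∂Measure.pi μ) (∑ i, (c i / 2) ^ 2)
      (Measure.pi μ) := by
  induction m with
  | zero =>
    have hconst (x : ∀ i, Ω i) : f x - ∫ y, f y ∂Measure.pi μ = 0 := by
      simp [fun y => congrArg f (Subsingleton.elim y x)]
    simp [hconst]
  | succ m ih =>
    set F := fun p : Ω 0 × _ => f (Fin.insertNth 0 p.1 p.2)
    have hF : Measurable F := hf.comp (MeasurableEquiv.piFinSuccAbove Ω 0).symm.measurable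
    obtain ⟨x₀⟩ := nonempty_of_isProbabilityMeasure (Measure.pi μ)
    have hFab (p) : F p ∈ _ := hc.mem_Icc x₀ (Fin.insertNth 0 p.1 p.2)
    have hFint (t) : Integrable (fun x => F (x, t)) (μ 0) :=
      .of_mem_Icc _ _ (hF.comp measurable_prodMk_right).aemeasurable (ae_of_all _ (hFab ⟨·, t⟩))
    have h₁ (t) := hasSubgaussianMGF_sub_integral_of_sub_le (μ := μ 0)
      (hF.comp measurable_prodMk_right).aemeasurable (hc.insertNth_sub_insertNth_le 0 · · t)
    have h₂ := ih (integral_of_forall (fun x => hc.comp_insertNth 0 x) hFint)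
      (fun j => μ (Fin.succAbove 0 j))
      (hF.stronglyMeasurable.integral_prod_left' (μ := μ 0)).measurable
    rw [← integral_prod_symm F (.of_mem_Icc _ _ hF.aemeasurable (ae_of_all _ hFab))] at h₂
    rw [Fin.sum_univ_succAbove _ 0]
    exact (HasSubgaussianMGF.prod_sub_integral hF hFab h₁ h₂).sub_integral_of_measurePreserving
      (measurePreserving_piFinSuccAbove μ 0)

/-- **McDiarmid's inequality**, in sub-Gaussian form. -/
theorem hasSubgaussianMGF_sub_integral_pi {ι : Type*} [Fintype ι] {Ω : ι → Type*}
    [∀ i, MeasurableSpace (Ω i)] {f : (∀ i, Ω i) → ℝ} {c : ι → ℝ≥0}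
    (hc : HasBoundedDifferences f c) (μ : ∀ i, Measure (Ω i)) [∀ i, IsProbabilityMeasure (μ i)]
    (hf : Measurable f) :
    HasSubgaussianMGF (fun x => f x - ∫ y, f y ∂Measure.pi μ) (∑ i, (c i / 2) ^ 2)
      (Measure.pi μ) := by
  set e := (Fintype.equivFin ι).symm
  set ψ := MeasurableEquiv.piCongrLeft Ω e
  have hψ : HasBoundedDifferences (fun x => f (ψ x)) (c ∘ e) := fun j x y hxy =>
    hc (e j) _ _ fun i hi => by
      obtain ⟨k, rfl⟩ := e.surjective i
      simp [ψ, MeasurableEquiv.coe_piCongrLeft, Equiv.piCongrLeft_apply_apply,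
        hxy k fun h => hi (congrArg e h)]
  rw [← e.sum_comp]
  exact (hψ.hasSubgaussianMGF_sub_integral_pi_fin _ (hf.comp ψ.measurable)
    ).sub_integral_of_measurePreserving ((measurePreserving_piCongrLeft μ e).symm ψ)

theorem hasSubgaussianMGF_sub_integral_pi_pi {ι : Type*} [Fintype ι] {κ : ι → Type*}
    [∀ i, Fintype (κ i)] {X : ∀ i, κ i → Type*} [∀ i j, MeasurableSpace (X i j)]
    {f : (∀ i j, X i j) → ℝ} {c : (Σ i, κ i) → ℝ≥0}
    (hc : HasBoundedDifferences (fun x => f (Sigma.curry x)) c)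
    (μ : ∀ i j, Measure (X i j)) [∀ i j, IsProbabilityMeasure (μ i j)] (hf : Measurable f) :
    HasSubgaussianMGF (fun x => f x - ∫ y, f y ∂Measure.pi fun i => Measure.pi (μ i))
      (∑ p, (c p / 2) ^ 2) (Measure.pi fun i => Measure.pi (μ i)) := by
  have he : MeasurePreserving (MeasurableEquiv.piCurry X)
      (Measure.pi fun p => μ p.1 p.2) (Measure.pi fun i => Measure.pi (μ i)) :=
    ⟨(MeasurableEquiv.piCurry X).measurable, by
      simpa only [Measure.infinitePi_eq_pi] using Measure.infinitePi_map_piCurry μ⟩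
  exact (hc.hasSubgaussianMGF_sub_integral_pi _ (hf.comp (MeasurableEquiv.piCurry X).measurable)
    ).sub_integral_of_measurePreserving (he.symm _)

end HasBoundedDifferences

section UniformDeviation

variable {ι : Type*} [Fintype ι] {κ : ι → Type*} [∀ i, Fintype (κ i)] {Z : Type*}
  {H : Type*} [Fintype H] [Nonempty H]

noncomputable def uniformDeviation (L : H → ℝ) (w : ι → ℝ≥0) (ℓ : H → Z → ℝ)
    (ω : ∀ i, κ i → Z) : ℝ :=
  univ.sup' univ_nonempty fun h => L h - ∑ i, (w i : ℝ) * ∑ j, ℓ h (ω i j)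

variable {L : H → ℝ} {w : ι → ℝ≥0} {ℓ : H → Z → ℝ}

lemma measurable_uniformDeviation [MeasurableSpace Z] (hℓ : ∀ h, Measurable (ℓ h)) :
    Measurable (uniformDeviation (κ := κ) L w ℓ) := by
  have : uniformDeviation (κ := κ) L w ℓ
      = univ.sup' univ_nonempty fun h ω => L h - ∑ i, (w i : ℝ) * ∑ j, ℓ h (ω i j) := by
    ext ω
    simp [uniformDeviation, Finset.sup'_apply]
  rw [this]
  exact measurable_sup' _ fun h _ => by fun_prop

lemma hasBoundedDifferences_uniformDeviation {M : ℝ≥0} (hℓ : ∀ h z, ℓ h z ∈ Set.Icc 0 (M : ℝ)) :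
    HasBoundedDifferences (fun x => uniformDeviation (κ := κ) L w ℓ (Sigma.curry x))
      fun p => w p.1 * M := by
  refine HasBoundedDifferences.finset_sup' _ fun h _ => ?_
  have hsum : HasBoundedDifferences (fun x : (Σ i, κ i) → Z => ∑ p, (w p.1 : ℝ) * ℓ h (x p))
      fun p => w p.1 * M :=
    hasBoundedDifferences_sum_apply (φ := fun (p : Σ i, κ i) z => (w p.1 : ℝ) * ℓ h z)
      fun p a b => by
      rw [NNReal.coe_mul, ← mul_sub]
      exact mul_le_mul_of_nonneg_left (by linarith [(hℓ h a).2, (hℓ h b).1]) (w p.1).2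
  convert hsum.const_sub (L h) using 3 with x
  simp [Fintype.sum_sigma, mul_sum, Sigma.curry]

theorem ofReal_one_sub_le_measure_uniformDeviation_le [MeasurableSpace Z] (D : ι → Measure Z)
    [∀ i, IsProbabilityMeasure (D i)] {M : ℝ≥0} (hmeas : ∀ h, Measurable (ℓ h))
    (hℓ : ∀ h z, ℓ h z ∈ Set.Icc 0 (M : ℝ)) {δ : ℝ} (hδ₀ : 0 < δ) (hδ₁ : δ ≤ 1) :
    ENNReal.ofReal (1 - δ) ≤ (Measure.pi fun i => Measure.pi fun _ : κ i => D i)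
      {ω | uniformDeviation L w ℓ ω
        ≤ ∫ ω', uniformDeviation L w ℓ ω' ∂Measure.pi (fun i => Measure.pi fun _ : κ i => D i)
          + M * √((∑ i, Fintype.card (κ i) * (w i : ℝ) ^ 2 / 2) * log (1 / δ))} := by
  have hsg := (hasBoundedDifferences_uniformDeviation (L := L) (w := w) hℓ
    ).hasSubgaussianMGF_sub_integral_pi_pi
    (fun i (_ : κ i) => D i) (measurable_uniformDeviation hmeas)
  refine (hsg.ofReal_one_sub_le_measure_le hδ₀ hδ₁).trans (measure_mono fun ω hω => ?_)
  have hradius : √(2 * ((∑ p : Σ i, κ i, (w p.1 * M / 2) ^ 2 : ℝ≥0) : ℝ) * log (1 / δ))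
      = M * √((∑ i, Fintype.card (κ i) * (w i : ℝ) ^ 2 / 2) * log (1 / δ)) := by
    rw [← sqrt_sq M.coe_nonneg, ← sqrt_mul (sq_nonneg (M : ℝ))]
    push_cast
    simp only [Fintype.sum_sigma, sum_const, card_univ, nsmul_eq_mul, mul_sum, sum_mul]
    exact congrArg sqrt (sum_congr rfl fun i _ => by ring)
  simp only [Set.mem_ofPred_eq, hradius] at hω ⊢
  linarith

end UniformDeviation

theorem udjfl_generalization_bound_general
    {Z : Type*} [MeasurableSpace Z] (N : ℕ)
    (D : Fin N → Measure Z) [∀ i, IsProbabilityMeasure (D i)]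
    (H : Type*) [Fintype H] [Nonempty H]
    (M : ℝ) (hM : 0 < M)
    (ℓ : H → Z → ℝ) (hmeas : ∀ h, Measurable (ℓ h))
    (hbound : ∀ h z, ℓ h z ∈ Set.Icc (0 : ℝ) M)
    (n : Fin N → ℕ) (hn : ∀ i, 0 < n i)
    (υ : Fin N → ℝ) (hυ : ∀ i, 0 ≤ υ i)
    (p q : ℝ) (hp : 1 < p) (hpq : 1 / p + 1 / q = 1)
    (δ : ℝ) (hδ : δ ∈ Set.Ioo (0 : ℝ) 1)
    (μ : Measure (∀ i : Fin N, Fin (n i) → Z))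
    (hμ : μ = Measure.pi fun i : Fin N => Measure.pi fun _ : Fin (n i) => D i)
    (Ltrue : H → ℝ)
    (Lemp : (∀ i : Fin N, Fin (n i) → Z) → H → ℝ)
    (hLemp : ∀ ω h, Lemp ω h = ∑ i, (υ i / (n i : ℝ)) * ∑ j, ℓ h (ω i j))
    (Ltilde : (∀ i : Fin N, Fin (n i) → Z) → H → ℝ)
    (hLtilde : ∀ ω h,
      Ltilde ω h = (∑ i, ((1 / (n i : ℝ)) * ∑ j, ℓ h (ω i j)) ^ q) ^ (1 / q)) :
    ENNReal.ofReal (1 - δ) ≤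
      μ {ω | ∀ h : H,
        Ltrue h ≤ (∑ i, υ i ^ p) ^ (1 / p) * Ltilde ω h
          + (∫ ω', (Finset.univ.sup' Finset.univ_nonempty
              fun h' : H => Ltrue h' - Lemp ω' h') ∂μ)
          + M * Real.sqrt ((∑ i, υ i ^ 2 / (2 * (n i : ℝ))) * Real.log (1 / δ))} := by
  subst hμ
  lift M to ℝ≥0 using hM.le
  set w : Fin N → ℝ≥0 := fun i => (υ i / n i).toNNReal
  have hw (i) : (w i : ℝ) = υ i / n i := Real.coe_toNNReal _ (by have := hυ i; positivity)
  have hdev (ω) : univ.sup' univ_nonempty (fun h => Ltrue h - Lemp ω h)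
      = uniformDeviation Ltrue w ℓ ω := by
    simp [uniformDeviation, hLemp, hw]
  have hradius : ∑ i, Fintype.card (Fin (n i)) * (w i : ℝ) ^ 2 / 2
      = ∑ i, υ i ^ 2 / (2 * (n i : ℝ)) := sum_congr rfl fun i _ => by
    have : (n i : ℝ) ≠ 0 := (Nat.cast_pos.2 (hn i)).ne'
    rw [Fintype.card_fin, hw]
    field_simp
  have hHolder (ω h) : Lemp ω h ≤ (∑ i, υ i ^ p) ^ (1 / p) * Ltilde ω h := by
    calc Lemp ω h = ∑ i, υ i * (1 / n i * ∑ j, ℓ h (ω i j)) := by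
          rw [hLemp]
          exact sum_congr rfl fun i _ => by ring
      _ ≤ (∑ i, υ i ^ p) ^ (1 / p) * Ltilde ω h := by
          rw [hLtilde]
          exact inner_le_Lp_mul_Lq_of_nonneg univ
            (Real.holderConjugate_iff.2 ⟨hp, by simpa only [one_div] using hpq⟩)
            (fun i _ => hυ i) fun i _ => mul_nonneg (by positivity)
              (sum_nonneg fun j _ => (hbound h _).1)
  refine (ofReal_one_sub_le_measure_uniformDeviation_le (L := Ltrue) (w := w) D hmeas hbound
    hδ.1 hδ.2.le).trans (measure_mono fun ω hω h => ?_)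
  simp only [Set.mem_ofPred_eq, hradius, hdev] at hω ⊢
  linarith [hHolder ω h, hdev ω ▸ le_sup' (fun h => Ltrue h - Lemp ω h) (mem_univ h)]

open MeasureTheory in
/-- Generalization bound for UDJ-FL with a specific weight vector `υ`: with probability at
least `1 − δ` over the i.i.d. draws `Z_{i,j} ~ D_i` (modeled by the product measure `μ`),
every hypothesis `h` satisfies
`L_υ(h) ≤ ‖υ‖_p·L̃_q(h) + E[max_{h'} (L_υ(h') − L̂_υ(h'))] + M·√((Σ_i υ_i²/(2n_i))·log(1/δ))`,
where `1/p + 1/q = 1`. -/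
theorem udjfl_generalization_bound
    {Z : Type*} [MeasurableSpace Z] (N : ℕ)
    (D : Fin N → Measure Z) [∀ i, IsProbabilityMeasure (D i)]
    (H : Type*) [Fintype H] [Nonempty H]
    (M : ℝ) (hM : 0 < M)
    (ℓ : H → Z → ℝ) (hmeas : ∀ h, Measurable (ℓ h))
    (hbound : ∀ h z, ℓ h z ∈ Set.Icc (0 : ℝ) M)
    (n : Fin N → ℕ) (hn : ∀ i, 0 < n i)
    (υ : Fin N → ℝ) (hυ : ∀ i, 0 ≤ υ i)
    (p q : ℝ) (hp : 1 < p) (hq : 1 < q) (hpq : 1 / p + 1 / q = 1)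
    (δ : ℝ) (hδ : δ ∈ Set.Ioo (0 : ℝ) 1)
    (μ : Measure (∀ i : Fin N, Fin (n i) → Z))
    (hμ : μ = Measure.pi fun i : Fin N => Measure.pi fun _ : Fin (n i) => D i)
    (Ltrue : H → ℝ) (hLtrue : ∀ h, Ltrue h = ∑ i, υ i * ∫ z, ℓ h z ∂(D i))
    (Lemp : (∀ i : Fin N, Fin (n i) → Z) → H → ℝ)
    (hLemp : ∀ ω h, Lemp ω h = ∑ i, (υ i / (n i : ℝ)) * ∑ j, ℓ h (ω i j))
    (Ltilde : (∀ i : Fin N, Fin (n i) → Z) → H → ℝ)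
    (hLtilde : ∀ ω h,
      Ltilde ω h = (∑ i, ((1 / (n i : ℝ)) * ∑ j, ℓ h (ω i j)) ^ q) ^ (1 / q)) :
    ENNReal.ofReal (1 - δ) ≤
      μ {ω | ∀ h : H,
        Ltrue h ≤ (∑ i, υ i ^ p) ^ (1 / p) * Ltilde ω h
          + (∫ ω', (Finset.univ.sup' Finset.univ_nonempty
              fun h' : H => Ltrue h' - Lemp ω' h') ∂μ)
          + M * Real.sqrt ((∑ i, υ i ^ 2 / (2 * (n i : ℝ))) * Real.log (1 / δ))} :=
  udjfl_generalization_bound_general N D H M hM ℓ hmeas hbound n hn υ hυ p q hp hpq δ hδ μ hμ Ltrue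
    Lemp hLemp Ltilde hLtilde
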